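/- arXiv:2505.20536 — 2 statements merged into one kernel-verified Lean document; each statement's English description precedes it below -/
import Mathlib

section
/- (Parameter perturbation stability of deep ReLU networks.) Let L ∈ ℕ, let d = (d_0, d_1, …, d_{L+1}) be positive integers, let C ≥ 1 and δ > 0. Let h and h′ be two deep ReLU networks of depth L with the same width vector d, both with all weights bounded in absolute value by C, such that each weight of h differs from the corresponding weight of h′ by at most δ in absolute value. Then for every x ∈ ℝ^{d_0} with ‖x‖_∞ ≤ 1, ‖h(x) − h′(x)‖_∞ ≤ δ (L+1) ∏_{ℓ=0}^{L} C (d_ℓ + 1). -/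
open Finset

/-- A deep ReLU network of depth `L` with width function `d` (only the values
`d 0, …, d (L+1)` are relevant): for `ℓ = 0, …, L`, the `(ℓ+1)`-st affine layer
`𝓛_{ℓ+1}(z) = M_ℓ z + b_ℓ` maps `ℝ^{d ℓ}` to `ℝ^{d (ℓ+1)}`. -/
structure ReLUNet (L : ℕ) (d : ℕ → ℕ) where
  M : (ℓ : ℕ) → Matrix (Fin (d (ℓ + 1))) (Fin (d ℓ)) ℝ
  b : (ℓ : ℕ) → Fin (d (ℓ + 1)) → ℝ

namespace ReLUNet

variable {L : ℕ} {d : ℕ → ℕ}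

/-- The vector after `k` affine layers, each followed by the entrywise
ReLU activation `u ↦ max u 0`. -/
def hidden (net : ReLUNet L d) : (k : ℕ) → (Fin (d 0) → ℝ) → Fin (d k) → ℝ
  | 0, x => x
  | k + 1, x => fun i => max ((net.M k).mulVec (net.hidden k x) i + net.b k i) 0

/-- The output of the network: the final affine layer `𝓛_{L+1}` (without activation)
applied to the hidden representation after `L` activated layers, i.e.
`h(x) = 𝓛_{L+1} ∘ σ̄_L ∘ 𝓛_L ∘ ⋯ ∘ σ̄_1 ∘ 𝓛_1 (x)`. -/
def eval (net : ReLUNet L d) (x : Fin (d 0) → ℝ) : Fin (d (L + 1)) → ℝ :=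
  (net.M L).mulVec (net.hidden L x) + net.b L

/-- All weights (entries of the matrices `M_ℓ` and biases `b_ℓ`, `ℓ = 0, …, L`)
are bounded in absolute value by `C`. -/
def WeightsBounded (net : ReLUNet L d) (C : ℝ) : Prop :=
  (∀ ℓ ≤ L, ∀ i j, |net.M ℓ i j| ≤ C) ∧ ∀ ℓ ≤ L, ∀ i, |net.b ℓ i| ≤ C

end ReLUNet

lemma auxProdOne {C : ℝ} (hC : 1 ≤ C) (d : ℕ → ℕ) (k : ℕ) :
    (1:ℝ) ≤ ∏ ℓ ∈ Finset.range k, C * ((d ℓ : ℝ) + 1) := by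
  induction k with
  | zero => simp
  | succ k ih =>
    rw [Finset.prod_range_succ]
    have hf : (1:ℝ) ≤ C * ((d k:ℝ)+1) := by
      nlinarith [(Nat.cast_nonneg (d k) : (0:ℝ) ≤ (d k : ℝ))]
    exact le_trans ih (le_mul_of_one_le_right (by linarith) hf)

lemma auxMulVec {n m : ℕ} (M : Matrix (Fin m) (Fin n) ℝ) (z : Fin n → ℝ)
    {C B : ℝ} (hM : ∀ i j, |M i j| ≤ C) (hz : ‖z‖ ≤ B) (hC : 0 ≤ C) (i : Fin m) :
    |M.mulVec z i| ≤ C * B * n := by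
  calc |M.mulVec z i| = |∑ j, M i j * z j| := by
        simp [Matrix.mulVec, dotProduct]
    _ ≤ ∑ j, |M i j * z j| := Finset.abs_sum_le_sum_abs _ _
    _ ≤ ∑ _j : Fin n, C * B := by
        apply Finset.sum_le_sum; intro j _
        rw [abs_mul]
        exact mul_le_mul (hM i j) (le_trans (norm_le_pi_norm z j) hz) (abs_nonneg _) hC
    _ = C * B * n := by simp [Finset.sum_const, mul_comm]

lemma auxAbsMax (a : ℝ) : |max a 0| ≤ |a| := by
  simpa using abs_max_sub_max_le_abs a 0 0

lemma auxHiddenBound {L : ℕ} {d : ℕ → ℕ} {C : ℝ} (hC : 1 ≤ C)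
    (net : ReLUNet L d) (hnet : net.WeightsBounded C)
    (x : Fin (d 0) → ℝ) (hx : ‖x‖ ≤ 1) :
    ∀ k, k ≤ L → ‖net.hidden k x‖ ≤ ∏ ℓ ∈ Finset.range k, C * ((d ℓ : ℝ) + 1) := by
  intro k
  induction k with
  | zero => intro _; simpa [ReLUNet.hidden] using hx
  | succ k ih =>
    intro hk
    have hk' : k ≤ L := Nat.le_of_succ_le hk
    have hB := ih hk'
    have hB1 : (1:ℝ) ≤ ∏ ℓ ∈ Finset.range k, C * ((d ℓ:ℝ)+1) := auxProdOne hC d k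
    rw [Finset.prod_range_succ]
    set B := ∏ ℓ ∈ Finset.range k, C * ((d ℓ:ℝ)+1) with hBdef
    have hC0 : (0:ℝ) ≤ C := le_trans zero_le_one hC
    rw [pi_norm_le_iff_of_nonneg (by positivity)]
    intro i
    simp only [ReLUNet.hidden, Real.norm_eq_abs]
    have h1 : |(net.M k).mulVec (net.hidden k x) i| ≤ C * B * (d k) :=
      auxMulVec _ _ (hnet.1 k hk') hB hC0 i
    have h2 : |net.b k i| ≤ C := hnet.2 k hk' i
    have h3 := auxAbsMax ((net.M k).mulVec (net.hidden k x) i + net.b k i)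
    have h4 := abs_add_le ((net.M k).mulVec (net.hidden k x) i) (net.b k i)
    have hdk : (0:ℝ) ≤ (d k : ℝ) := Nat.cast_nonneg _
    nlinarith

lemma auxAffineDiff {n m : ℕ} (M M' : Matrix (Fin m) (Fin n) ℝ) (b b' : Fin m → ℝ)
    (z z' : Fin n → ℝ) {C δ E B : ℝ}
    (hM : ∀ i j, |M i j| ≤ C) (hMd : ∀ i j, |M i j - M' i j| ≤ δ)
    (hbd : ∀ i, |b i - b' i| ≤ δ)
    (hE : ‖z - z'‖ ≤ E) (hB : ‖z'‖ ≤ B) (hC0 : 0 ≤ C) (hδ0 : 0 ≤ δ) (i : Fin m) :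
    |M.mulVec z i + b i - (M'.mulVec z' i + b' i)| ≤ C * E * n + δ * B * n + δ := by
  have key : M.mulVec z i - M'.mulVec z' i
      = M.mulVec (z - z') i + (M - M').mulVec z' i := by
    simp [Matrix.sub_mulVec, Matrix.mulVec_sub]
  have h1 : |M.mulVec (z - z') i| ≤ C * E * n := auxMulVec M (z - z') hM hE hC0 i
  have h2 : |(M - M').mulVec z' i| ≤ δ * B * n := by
    apply auxMulVec (M - M') z' _ hB hδ0 i
    intro i j; simpa using hMd i j
  calc |M.mulVec z i + b i - (M'.mulVec z' i + b' i)|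
      = |(M.mulVec (z - z') i + (M - M').mulVec z' i) + (b i - b' i)| := by
        rw [← key]; ring_nf
    _ ≤ |M.mulVec (z - z') i + (M - M').mulVec z' i| + |b i - b' i| := abs_add_le _ _
    _ ≤ (|M.mulVec (z - z') i| + |(M - M').mulVec z' i|) + δ :=
        add_le_add (abs_add_le _ _) (hbd i)
    _ ≤ C * E * n + δ * B * n + δ := by linarith

lemma auxHiddenPert {L : ℕ} {d : ℕ → ℕ} {C δ : ℝ} (hC : 1 ≤ C) (hδ : 0 ≤ δ)
    (net net' : ReLUNet L d)
    (hnet : net.WeightsBounded C) (hnet' : net'.WeightsBounded C)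
    (hM : ∀ ℓ ≤ L, ∀ i j, |net.M ℓ i j - net'.M ℓ i j| ≤ δ)
    (hb : ∀ ℓ ≤ L, ∀ i, |net.b ℓ i - net'.b ℓ i| ≤ δ)
    (x : Fin (d 0) → ℝ) (hx : ‖x‖ ≤ 1) :
    ∀ k, k ≤ L → ‖net.hidden k x - net'.hidden k x‖ ≤
      δ * k * ∏ ℓ ∈ Finset.range k, C * ((d ℓ : ℝ) + 1) := by
  intro k
  induction k with
  | zero => intro _; simp [ReLUNet.hidden]
  | succ k ih =>
    intro hk
    have hk' : k ≤ L := Nat.le_of_succ_le hk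
    have hE := ih hk'
    have hB := auxHiddenBound hC net' hnet' x hx k hk'
    have hB1 : (1:ℝ) ≤ ∏ ℓ ∈ Finset.range k, C * ((d ℓ:ℝ)+1) := auxProdOne hC d k
    rw [Finset.prod_range_succ]
    set B := ∏ ℓ ∈ Finset.range k, C * ((d ℓ:ℝ)+1) with hBdef
    have hC0 : (0:ℝ) ≤ C := le_trans zero_le_one hC
    have hdk : (0:ℝ) ≤ (d k : ℝ) := Nat.cast_nonneg _
    have hk0 : (0:ℝ) ≤ (k:ℝ) := Nat.cast_nonneg _
    rw [pi_norm_le_iff_of_nonneg (by positivity)]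
    intro i
    have hstep := auxAffineDiff (net.M k) (net'.M k) (net.b k) (net'.b k)
      (net.hidden k x) (net'.hidden k x) (hnet.1 k hk') (hM k hk') (hb k hk')
      hE hB hC0 hδ i
    have hmax := abs_max_sub_max_le_abs
      ((net.M k).mulVec (net.hidden k x) i + net.b k i)
      ((net'.M k).mulVec (net'.hidden k x) i + net'.b k i) 0
    simp only [ReLUNet.hidden, Pi.sub_apply, Real.norm_eq_abs]
    have hgoal : |((net.M k).mulVec (net.hidden k x) i + net.b k i) ⊔ 0 -
        ((net'.M k).mulVec (net'.hidden k x) i + net'.b k i) ⊔ 0| ≤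
        C * (δ * ↑k * B) * ↑(d k) + δ * B * ↑(d k) + δ := le_trans hmax hstep
    have hB0 : (0:ℝ) ≤ B := by linarith
    have t1 : (0:ℝ) ≤ δ * k * B * C := by positivity
    have t2 : (0:ℝ) ≤ δ * B * (d k) * (C - 1) :=
      mul_nonneg (mul_nonneg (mul_nonneg hδ hB0) hdk) (by linarith)
    have t3 : (0:ℝ) ≤ δ * (B * C - 1) := mul_nonneg hδ (by nlinarith)
    push_cast
    nlinarith [t1, t2, t3, hgoal]

/-- **Parameter perturbation stability of deep ReLU networks.**
If `h` and `h′` share the same architecture, both have weights bounded in absolute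
value by `C ≥ 1`, and each weight of `h` differs from the corresponding weight of `h′`
by at most `δ`, then for every input `x` with `‖x‖_∞ ≤ 1`,
`‖h(x) − h′(x)‖_∞ ≤ δ (L+1) ∏_{ℓ=0}^{L} C (d_ℓ + 1)`. -/
theorem ReLUNet.eval_perturbation {L : ℕ} {d : ℕ → ℕ} (hd : ∀ ℓ ≤ L + 1, 0 < d ℓ)
    {C δ : ℝ} (hC : 1 ≤ C) (hδ : 0 < δ)
    (net net' : ReLUNet L d)
    (hnet : net.WeightsBounded C) (hnet' : net'.WeightsBounded C)
    (hM : ∀ ℓ ≤ L, ∀ i j, |net.M ℓ i j - net'.M ℓ i j| ≤ δ)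
    (hb : ∀ ℓ ≤ L, ∀ i, |net.b ℓ i - net'.b ℓ i| ≤ δ)
    (x : Fin (d 0) → ℝ) (hx : ‖x‖ ≤ 1) :
    ‖net.eval x - net'.eval x‖ ≤
      δ * (L + 1) * ∏ ℓ ∈ Finset.range (L + 1), C * ((d ℓ : ℝ) + 1) := by
  have hδ0 : (0:ℝ) ≤ δ := le_of_lt hδ
  have hE := auxHiddenPert hC hδ0 net net' hnet hnet' hM hb x hx L le_rfl
  have hB := auxHiddenBound hC net' hnet' x hx L le_rfl
  have hB1 : (1:ℝ) ≤ ∏ ℓ ∈ Finset.range L, C * ((d ℓ:ℝ)+1) := auxProdOne hC d L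
  rw [Finset.prod_range_succ]
  set B := ∏ ℓ ∈ Finset.range L, C * ((d ℓ:ℝ)+1) with hBdef
  have hC0 : (0:ℝ) ≤ C := le_trans zero_le_one hC
  have hdL : (0:ℝ) ≤ (d L : ℝ) := Nat.cast_nonneg _
  have hL0 : (0:ℝ) ≤ (L:ℝ) := Nat.cast_nonneg _
  rw [pi_norm_le_iff_of_nonneg (by positivity)]
  intro i
  have hstep := auxAffineDiff (net.M L) (net'.M L) (net.b L) (net'.b L)
    (net.hidden L x) (net'.hidden L x) (hnet.1 L le_rfl) (hM L le_rfl) (hb L le_rfl)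
    hE hB hC0 hδ0 i
  simp only [ReLUNet.eval, Pi.sub_apply, Pi.add_apply, Real.norm_eq_abs]
  have hB0 : (0:ℝ) ≤ B := by linarith
  have t1 : (0:ℝ) ≤ δ * L * B * C := by positivity
  have t2 : (0:ℝ) ≤ δ * B * (d L) * (C - 1) :=
    mul_nonneg (mul_nonneg (mul_nonneg hδ0 hB0) hdL) (by linarith)
  have t3 : (0:ℝ) ≤ δ * (B * C - 1) := mul_nonneg hδ0 (by nlinarith)
  nlinarith [t1, t2, t3, hstep]
end

section
/- (Covering number of the deep ReLU network class.) Let L ∈ ℕ, let d = (d_0, d_1, …, d_{L+1}) be positive integers, let C ≥ 1, and let V = Σ_{ℓ=1}^{L+1} d_ℓ (d_{ℓ−1} + 1) be the total number of weights. Let 𝒢 be the set of all deep ReLU networks of depth L with width vector d and weights bounded in absolute value by C. Then for every δ > 0 there exists a finite subset F ⊆ 𝒢 of cardinality at most (⌈2C/δ⌉ + 1)^V such that for every h ∈ 𝒢 there is f ∈ F with sup_{x ∈ [0,1]^{d_0}} ‖h(x) − f(x)‖_∞ ≤ δ (L+1) ∏_{ℓ=0}^{L} C (d_ℓ + 1).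 -/
/-!
Replace every weight by a point within `δ` of it on a grid of `⌈2C/δ⌉ + 1` points in
`[-C, C]`; this yields at most `(⌈2C/δ⌉ + 1)^V` networks. On inputs in `[0,1]^{d_0}` the
`k`-th hidden layer is bounded by `B_k = ∏_{ℓ<k} C (d_ℓ + 1)`, and perturbing all weights
by at most `δ` moves it by at most `δ k B_k`: an affine layer with weights bounded by `C`
turns an error `E` on an input bounded by `B` into an error of at most `d (C E + δ B) + δ`,
and the ReLU is `1`-Lipschitz.
-/

open Finset

open scoped Matrix

lemma Matrix.abs_mulVec_apply_le {m n : ℕ} {a e : ℝ} {A : Matrix (Fin m) (Fin n) ℝ}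
    {u : Fin n → ℝ} (hA : ∀ i j, |A i j| ≤ a) (hu : ∀ j, |u j| ≤ e) (i : Fin m) :
    |(A *ᵥ u) i| ≤ n * (a * e) :=
  calc |∑ j, A i j * u j| ≤ ∑ j, |A i j * u j| := abs_sum_le_sum_abs _ _
    _ ≤ ∑ _j : Fin n, a * e := by
        gcongr with j
        rw [abs_mul]
        exact mul_le_mul (hA i j) (hu j) (abs_nonneg _) ((abs_nonneg _).trans (hA i j))
    _ = n * (a * e) := by simp

lemma abs_affine_apply_le {m n : ℕ} {C B : ℝ} {M : Matrix (Fin m) (Fin n) ℝ}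
    {b : Fin m → ℝ} {v : Fin n → ℝ} (hC : 0 ≤ C) (hB : 1 ≤ B)
    (hM : ∀ i j, |M i j| ≤ C) (hb : ∀ i, |b i| ≤ C) (hv : ∀ j, |v j| ≤ B) (i : Fin m) :
    |(M *ᵥ v + b) i| ≤ B * (C * (n + 1)) :=
  calc |(M *ᵥ v) i + b i| ≤ |(M *ᵥ v) i| + |b i| := abs_add_le _ _
    _ ≤ n * (C * B) + C * B :=
        add_le_add (Matrix.abs_mulVec_apply_le hM hv i)
          ((hb i).trans (le_mul_of_one_le_right hC hB))
    _ = B * (C * (n + 1)) := by ring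

lemma abs_affine_sub_affine_apply_le {m n : ℕ} {C δ B E : ℝ}
    {M₁ M₂ : Matrix (Fin m) (Fin n) ℝ} {b₁ b₂ : Fin m → ℝ} {v₁ v₂ : Fin n → ℝ}
    (hM₁ : ∀ i j, |M₁ i j| ≤ C) (hM : ∀ i j, |M₁ i j - M₂ i j| ≤ δ)
    (hb : ∀ i, |b₁ i - b₂ i| ≤ δ) (hv₂ : ∀ j, |v₂ j| ≤ B) (hv : ∀ j, |v₁ j - v₂ j| ≤ E)
    (i : Fin m) :
    |(M₁ *ᵥ v₁ + b₁) i - (M₂ *ᵥ v₂ + b₂) i| ≤ n * (C * E) + n * (δ * B) + δ := by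
  have hsplit : (M₁ *ᵥ v₁ + b₁) i - (M₂ *ᵥ v₂ + b₂) i
      = (M₁ *ᵥ (v₁ - v₂)) i + ((M₁ - M₂) *ᵥ v₂) i + (b₁ i - b₂ i) := by
    simp only [Matrix.mulVec_sub, Matrix.sub_mulVec, Pi.add_apply, Pi.sub_apply]
    ring
  rw [hsplit]
  refine (abs_add_three _ _ _).trans (add_le_add (add_le_add ?_ ?_) (hb i))
  · exact Matrix.abs_mulVec_apply_le hM₁ hv i
  · exact Matrix.abs_mulVec_apply_le hM hv₂ i

lemma exists_finset_abs_sub_le {C δ : ℝ} (hC : 0 ≤ C) (hδ : 0 < δ) :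
    ∃ G : Finset ℝ, #G ≤ ⌈2 * C / δ⌉₊ + 1 ∧ (∀ y ∈ G, |y| ≤ C) ∧
      ∀ w, |w| ≤ C → ∃ y ∈ G, |w - y| ≤ δ := by
  refine ⟨(range (⌈2 * C / δ⌉₊ + 1)).image fun k : ℕ => min (-C + k * δ) C,
    card_image_le.trans (card_range _).le, ?_, ?_⟩
  · simp only [mem_image, forall_exists_index, and_imp]
    rintro _ k - rfl
    have : 0 ≤ (k : ℝ) * δ := by positivity
    exact abs_le.2 ⟨le_min (by linarith) (by linarith), min_le_right _ _⟩
  · intro w hw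
    obtain ⟨hw₁, hw₂⟩ := abs_le.1 hw
    set k := ⌊(w + C) / δ⌋₊
    have hk_le : (k : ℝ) * δ ≤ w + C :=
      (le_div_iff₀ hδ).1 (Nat.floor_le (div_nonneg (by linarith) hδ.le))
    have hk_lt : w + C < (k + 1) * δ := (div_lt_iff₀ hδ).1 (Nat.lt_floor_add_one _)
    have hkN : k ≤ ⌈2 * C / δ⌉₊ :=
      (Nat.floor_le_floor (div_le_div_of_nonneg_right (by linarith) hδ.le)).trans
        (Nat.floor_le_ceil _)
    refine ⟨-C + k * δ, mem_image.2 ⟨k, mem_range.2 (Nat.lt_succ_of_le hkN), ?_⟩, ?_⟩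
    · exact min_eq_left (by linarith)
    · exact abs_le.2 ⟨by linarith, by linarith⟩

namespace ReLUNet

variable {L : ℕ} {d : ℕ → ℕ}

instance : Sub (ReLUNet L d) := ⟨fun g f => ⟨g.M - f.M, g.b - f.b⟩⟩

def preActivation (net : ReLUNet L d) (k : ℕ) (x : Fin (d 0) → ℝ) : Fin (d (k + 1)) → ℝ :=
  net.M k *ᵥ net.hidden k x + net.b k

lemma hidden_succ_apply (net : ReLUNet L d) (k : ℕ) (x : Fin (d 0) → ℝ) (i : Fin (d (k + 1))) :
    net.hidden (k + 1) x i = max (net.preActivation k x i) 0 := rfl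

lemma eval_eq_preActivation (net : ReLUNet L d) : net.eval = net.preActivation L := rfl

def hiddenBound (C : ℝ) (d : ℕ → ℕ) (k : ℕ) : ℝ := ∏ ℓ ∈ range k, C * ((d ℓ : ℝ) + 1)

lemma hiddenBound_succ (C : ℝ) (d : ℕ → ℕ) (k : ℕ) :
    hiddenBound C d (k + 1) = hiddenBound C d k * (C * ((d k : ℝ) + 1)) :=
  prod_range_succ _ _

lemma one_le_hiddenBound {C : ℝ} (hC : 1 ≤ C) (d : ℕ → ℕ) (k : ℕ) : 1 ≤ hiddenBound C d k :=
  one_le_prod fun ℓ _ => one_le_mul_of_one_le_of_one_le hC (by simp)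

section Bounds

variable {C δ : ℝ} {x : Fin (d 0) → ℝ}

lemma abs_hidden_le {net : ReLUNet L d} (hC : 1 ≤ C) (hw : net.WeightsBounded C)
    (hx : ∀ i, |x i| ≤ 1) {k : ℕ} (hk : k ≤ L) (i : Fin (d k)) :
    |net.hidden k x i| ≤ hiddenBound C d k := by
  induction k with
  | zero => simpa [hiddenBound, hidden] using hx i
  | succ k ih =>
    have hk' : k ≤ L := k.le_succ.trans hk
    rw [hidden_succ_apply, hiddenBound_succ]
    calc |max (net.preActivation k x i) 0| ≤ |net.preActivation k x i| := by
          simpa using abs_max_sub_max_le_abs (net.preActivation k x i) 0 0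
      _ ≤ _ := abs_affine_apply_le (by linarith) (one_le_hiddenBound hC d k)
          (hw.1 k hk') (hw.2 k hk') (ih hk') i

lemma abs_preActivation_sub_le {g f : ReLUNet L d} (hC : 1 ≤ C) (hδ : 0 ≤ δ)
    (hg : g.WeightsBounded C) (hf : f.WeightsBounded C) (hgf : (g - f).WeightsBounded δ)
    (hx : ∀ i, |x i| ≤ 1) {k : ℕ} (hk : k ≤ L)
    (hE : ∀ j, |g.hidden k x j - f.hidden k x j| ≤ δ * k * hiddenBound C d k)
    (i : Fin (d (k + 1))) :
    |g.preActivation k x i - f.preActivation k x i| ≤ δ * (k + 1) * hiddenBound C d (k + 1) := by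
  have hB := one_le_hiddenBound hC d k
  set B := hiddenBound C d k
  have hn : (0 : ℝ) ≤ d k := Nat.cast_nonneg _
  have hCB : 1 ≤ C * B := one_le_mul_of_one_le_of_one_le hC hB
  have hδk : 0 ≤ δ * k := by positivity
  calc |g.preActivation k x i - f.preActivation k x i|
      ≤ d k * (C * (δ * k * B)) + d k * (δ * B) + δ :=
        abs_affine_sub_affine_apply_le (hg.1 k hk) (hgf.1 k hk) (hgf.2 k hk)
          (abs_hidden_le hC hf hx hk) hE i
    -- `d k * B ≤ d k * (C * B)` and `1 ≤ C * B`
    _ ≤ δ * (k + 1) * (B * (C * (d k + 1))) := by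
        nlinarith [mul_nonneg (mul_nonneg hδ hn) (by nlinarith : 0 ≤ C * B - B),
          mul_nonneg hδk (by nlinarith : 0 ≤ C * B)]
    _ = δ * (k + 1) * hiddenBound C d (k + 1) := by rw [hiddenBound_succ]

lemma abs_hidden_sub_le {g f : ReLUNet L d} (hC : 1 ≤ C) (hδ : 0 ≤ δ)
    (hg : g.WeightsBounded C) (hf : f.WeightsBounded C) (hgf : (g - f).WeightsBounded δ)
    (hx : ∀ i, |x i| ≤ 1) {k : ℕ} (hk : k ≤ L) (i : Fin (d k)) :
    |g.hidden k x i - f.hidden k x i| ≤ δ * k * hiddenBound C d k := by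
  induction k with
  | zero => simp [hidden]
  | succ k ih =>
    rw [hidden_succ_apply, hidden_succ_apply, Nat.cast_succ]
    exact (abs_max_sub_max_le_abs _ _ _).trans <|
      abs_preActivation_sub_le hC hδ hg hf hgf hx (k.le_succ.trans hk) (ih (k.le_succ.trans hk)) i

lemma norm_eval_sub_le {g f : ReLUNet L d} (hC : 1 ≤ C) (hδ : 0 ≤ δ)
    (hg : g.WeightsBounded C) (hf : f.WeightsBounded C) (hgf : (g - f).WeightsBounded δ)
    (hx : ∀ i, |x i| ≤ 1) :
    ‖g.eval x - f.eval x‖ ≤ δ * (L + 1) * hiddenBound C d (L + 1) := by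
  have hnonneg : 0 ≤ δ * (L + 1) * hiddenBound C d (L + 1) := by
    have := one_le_hiddenBound hC d (L + 1)
    positivity
  refine (pi_norm_le_iff_of_nonneg hnonneg).2 fun i => ?_
  rw [Pi.sub_apply, Real.norm_eq_abs, eval_eq_preActivation, eval_eq_preActivation]
  exact abs_preActivation_sub_le hC hδ hg hf hgf hx le_rfl
    (abs_hidden_sub_le hC hδ hg hf hgf hx le_rfl) i

end Bounds

abbrev WeightIndex (L : ℕ) (d : ℕ → ℕ) : Type :=
  Σ ℓ : Fin (L + 1), Fin (d (ℓ + 1)) × Fin (d ℓ) ⊕ Fin (d (ℓ + 1))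

lemma card_weightIndex :
    Fintype.card (WeightIndex L d) = ∑ ℓ ∈ range (L + 1), d (ℓ + 1) * (d ℓ + 1) := by
  simp only [Fintype.card_sigma, Fintype.card_sum, Fintype.card_prod, Fintype.card_fin]
  rw [Fin.sum_univ_eq_sum_range (fun ℓ => d (ℓ + 1) * d ℓ + d (ℓ + 1))]
  simp only [mul_add, mul_one]

def weights (net : ReLUNet L d) : WeightIndex L d → ℝ
  | ⟨ℓ, .inl (i, j)⟩ => net.M ℓ i j
  | ⟨ℓ, .inr i⟩ => net.b ℓ i

/-- The layers beyond `L`, which do not affect `eval`, are set to zero. -/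
def ofWeights (w : WeightIndex L d → ℝ) : ReLUNet L d where
  M ℓ i j := if h : ℓ < L + 1 then w ⟨⟨ℓ, h⟩, .inl (i, j)⟩ else 0
  b ℓ i := if h : ℓ < L + 1 then w ⟨⟨ℓ, h⟩, .inr i⟩ else 0

lemma weights_ofWeights (w : WeightIndex L d → ℝ) : (ofWeights w).weights = w := by
  funext ⟨ℓ, k⟩
  rcases k with ⟨i, j⟩ | i <;> exact dif_pos ℓ.2

lemma weights_sub (g f : ReLUNet L d) : (g - f).weights = g.weights - f.weights := by
  funext ⟨ℓ, k⟩
  rcases k with ⟨i, j⟩ | i <;> rfl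

lemma weightsBounded_iff {net : ReLUNet L d} {C : ℝ} :
    net.WeightsBounded C ↔ ∀ k, |net.weights k| ≤ C := by
  refine ⟨?_, fun h => ⟨fun ℓ hℓ i j => ?_, fun ℓ hℓ i => ?_⟩⟩
  · rintro ⟨hM, hb⟩ ⟨ℓ, ⟨i, j⟩ | i⟩
    exacts [hM ℓ (Nat.lt_succ_iff.1 ℓ.2) i j, hb ℓ (Nat.lt_succ_iff.1 ℓ.2) i]
  exacts [h ⟨⟨ℓ, Nat.lt_succ_of_le hℓ⟩, .inl (i, j)⟩, h ⟨⟨ℓ, Nat.lt_succ_of_le hℓ⟩, .inr i⟩]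

end ReLUNet

theorem ReLUNet.covering_general {L : ℕ} {d : ℕ → ℕ}
    {C : ℝ} (hC : 1 ≤ C) (V : ℕ)
    (hV : V = ∑ ℓ ∈ Finset.range (L + 1), d (ℓ + 1) * (d ℓ + 1))
    (𝒢 : Set ((Fin (d 0) → ℝ) → Fin (d (L + 1)) → ℝ))
    (h𝒢 : 𝒢 = {f | ∃ net : ReLUNet L d, net.WeightsBounded C ∧ f = net.eval}) :
    ∀ δ > (0 : ℝ), ∃ F : Finset ((Fin (d 0) → ℝ) → Fin (d (L + 1)) → ℝ),
      ↑F ⊆ 𝒢 ∧ F.card ≤ (⌈2 * C / δ⌉₊ + 1) ^ V ∧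
      ∀ h ∈ 𝒢, ∃ f ∈ F, ∀ x : Fin (d 0) → ℝ, (∀ i, x i ∈ Set.Icc (0 : ℝ) 1) →
        ‖h x - f x‖ ≤ δ * (L + 1) * ∏ ℓ ∈ Finset.range (L + 1), C * ((d ℓ : ℝ) + 1) := by
  classical
  intro δ hδ
  obtain ⟨G, hG_card, hG_bdd, hG_approx⟩ := exists_finset_abs_sub_le (zero_le_one.trans hC) hδ
  have hgrid_bdd {w : WeightIndex L d → ℝ} (hw : w ∈ Fintype.piFinset fun _ => G) :
      (ofWeights w).WeightsBounded C := by
    rw [weightsBounded_iff, weights_ofWeights]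
    exact fun k => hG_bdd _ (Fintype.mem_piFinset.1 hw k)
  subst h𝒢
  refine ⟨(Fintype.piFinset fun _ => G).image fun w => (ofWeights w).eval, ?_, ?_, ?_⟩
  · simp only [coe_image, Set.image_subset_iff]
    exact fun w hw => ⟨ofWeights w, hgrid_bdd hw, rfl⟩
  · calc _ ≤ #(Fintype.piFinset fun _ : WeightIndex L d => G) := card_image_le
      _ ≤ (⌈2 * C / δ⌉₊ + 1) ^ V := by
        rw [Fintype.card_piFinset, prod_const, card_univ, hV, ← card_weightIndex]
        exact Nat.pow_le_pow_left hG_card _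
  · rintro _ ⟨net, hnet, rfl⟩
    choose! q hqG hq using fun k => hG_approx (net.weights k) (weightsBounded_iff.1 hnet k)
    have hmem : q ∈ Fintype.piFinset fun _ => G := Fintype.mem_piFinset.2 hqG
    refine ⟨_, mem_image_of_mem _ hmem, fun x hx => ?_⟩
    have hsub : (net - ofWeights q).WeightsBounded δ := by
      rw [weightsBounded_iff, weights_sub, weights_ofWeights]
      exact hq
    exact norm_eval_sub_le hC hδ.le hnet (hgrid_bdd hmem) hsub
      fun i => abs_le.2 ⟨by linarith [(hx i).1], (hx i).2⟩

/-- **Covering number of the deep ReLU network class.**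
Let `𝒢` be the set of all functions realized by depth-`L` ReLU networks with width
vector `d` and weights bounded in absolute value by `C ≥ 1`, and let
`V = Σ_{ℓ=1}^{L+1} d_ℓ (d_{ℓ−1} + 1)` be the total number of weights. Then for every
`δ > 0` there is a finite subset `F ⊆ 𝒢` of cardinality at most `(⌈2C/δ⌉ + 1)^V`
such that every `h ∈ 𝒢` is within `δ (L+1) ∏_{ℓ=0}^{L} C (d_ℓ + 1)` of some `f ∈ F`
in the supremum norm over `[0,1]^{d_0}`. -/
theorem ReLUNet.covering {L : ℕ} {d : ℕ → ℕ} (hd : ∀ ℓ ≤ L + 1, 0 < d ℓ)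
    {C : ℝ} (hC : 1 ≤ C) (V : ℕ)
    (hV : V = ∑ ℓ ∈ Finset.range (L + 1), d (ℓ + 1) * (d ℓ + 1))
    (𝒢 : Set ((Fin (d 0) → ℝ) → Fin (d (L + 1)) → ℝ))
    (h𝒢 : 𝒢 = {f | ∃ net : ReLUNet L d, net.WeightsBounded C ∧ f = net.eval}) :
    ∀ δ > (0 : ℝ), ∃ F : Finset ((Fin (d 0) → ℝ) → Fin (d (L + 1)) → ℝ),
      ↑F ⊆ 𝒢 ∧ F.card ≤ (⌈2 * C / δ⌉₊ + 1) ^ V ∧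
      ∀ h ∈ 𝒢, ∃ f ∈ F, ∀ x : Fin (d 0) → ℝ, (∀ i, x i ∈ Set.Icc (0 : ℝ) 1) →
        ‖h x - f x‖ ≤ δ * (L + 1) * ∏ ℓ ∈ Finset.range (L + 1), C * ((d ℓ : ℝ) + 1) :=
  ReLUNet.covering_general hC V hV 𝒢 h𝒢
end
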